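/- (Theorem 1) Let B ≥ 1, ρ ∈ [0,1], ε > 0, and set c = (1 − ε(1+ε))/(1 + ε(1+ε)). Let O be a duplicate-free list of products with |O| ≤ B maximizing f among duplicate-free lists of length at most B. Suppose (𝒮, y) is feasible for P.A.1 (y ∉ 𝒮, Π_{i∈𝒮} θ_i ≥ ρ, |𝒮| < B) and satisfies g(𝒮 ∪ {y}) ≥ c · g(𝒮′ ∪ {y′}) for every P.A.1-feasible pair (𝒮′, y′). Then for any ordering S of 𝒮, the sequence S ⊕ y obtained by appending y to S satisfies f(S ⊕ y) ≥ c · ρ(1 − ρ) · f(O). -/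

import Mathlib

/-- MNL expected revenue of a finite set `S` of products, where product `i`
has revenue `α i` and preference weight `β i`. -/
noncomputable def g (α β : ℕ → ℝ) (S : Finset ℕ) : ℝ :=
  (∑ i ∈ S, α i * β i) / ((∑ i ∈ S, β i) + 1)

/-- Reachability of (0-based) position `t` of the sequence `S` under the
cascade browse model: the product of the continuation probabilities of all
earlier products. -/
noncomputable def reach (θ : ℕ → ℝ) (S : List ℕ) (t : ℕ) : ℝ :=
  ∏ j ∈ Finset.range t, θ (S.getD j 0)

/-- Expected revenue of a sequence of products `S` under the cascade browse
model combined with the MNL choice model. -/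
noncomputable def f (α β θ : ℕ → ℝ) (S : List ℕ) : ℝ :=
  (∑ t ∈ Finset.range (S.length - 1),
      reach θ S t * (1 - θ (S.getD t 0)) * g α β (S.take (t + 1)).toFinset)
    + reach θ S (S.length - 1) * g α β S.toFinset

/-!
For `c > 0` (otherwise the bound is trivial) `M = g(𝒮 ∪ {y}) / c` bounds `g` over all
P.A.1-feasible pairs. In any duplicate-free list `L` of length at most `B`, let `m` be the first
position whose reachability falls below `ρ`. Every prefix ending before `m` is of the form
`𝒮' ∪ {y'}` with `(𝒮', y')` feasible, so it has revenue at most `M`. Since `g` is subadditive on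
disjoint sets, a longer prefix has revenue at most `M` plus the revenue of the corresponding prefix
of the suffix `D` starting at `m`; as `D` is reached with probability less than `ρ`, this gives
`f(L) ≤ M + ρ f(D) ≤ M + ρ f(O)`. Taking `L = O` yields `(1 - ρ) f(O) ≤ M`. Finally, in `S ⊕ y`
the product `y` is reached with probability `∏_{i ∈ 𝒮} θ_i ≥ ρ`, and a customer stopping there
has seen `𝒮 ∪ {y}`, so `f(S ⊕ y) ≥ ρ g(𝒮 ∪ {y}) ≥ c ρ (1 - ρ) f(O)`.
-/

open Finset

section Revenue

variable {α β : ℕ → ℝ}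

lemma g_empty : g α β ∅ = 0 := by simp [g]

lemma g_nonneg (hα : ∀ i, 0 ≤ α i) (hβ : ∀ i, 0 ≤ β i) (A : Finset ℕ) : 0 ≤ g α β A :=
  div_nonneg (sum_nonneg fun i _ => mul_nonneg (hα i) (hβ i))
    (add_nonneg (sum_nonneg fun i _ => hβ i) zero_le_one)

lemma g_union_le_add (hα : ∀ i, 0 ≤ α i) (hβ : ∀ i, 0 ≤ β i) {A C : Finset ℕ}
    (hAC : Disjoint A C) : g α β (A ∪ C) ≤ g α β A + g α β C := by
  have hA : 0 ≤ ∑ i ∈ A, β i := sum_nonneg fun i _ => hβ i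
  have hC : 0 ≤ ∑ i ∈ C, β i := sum_nonneg fun i _ => hβ i
  have hαA : 0 ≤ ∑ i ∈ A, α i * β i := sum_nonneg fun i _ => mul_nonneg (hα i) (hβ i)
  have hαC : 0 ≤ ∑ i ∈ C, α i * β i := sum_nonneg fun i _ => mul_nonneg (hα i) (hβ i)
  unfold g
  rw [sum_union hAC, sum_union hAC, add_div]
  gcongr <;> linarith

end Revenue

section Reach

variable {θ : ℕ → ℝ}

lemma reach_zero (L : List ℕ) : reach θ L 0 = 1 := by simp [reach]

lemma reach_succ (L : List ℕ) (t : ℕ) : reach θ L (t + 1) = reach θ L t * θ (L.getD t 0) :=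
  prod_range_succ _ _

lemma reach_nonneg (hθ : ∀ i, 0 ≤ θ i ∧ θ i ≤ 1) (L : List ℕ) (t : ℕ) : 0 ≤ reach θ L t :=
  prod_nonneg fun _ _ => (hθ _).1

lemma reach_mul_one_sub_nonneg (hθ : ∀ i, 0 ≤ θ i ∧ θ i ≤ 1) (L : List ℕ) (t : ℕ) :
    0 ≤ reach θ L t * (1 - θ (L.getD t 0)) :=
  mul_nonneg (reach_nonneg hθ L t) (sub_nonneg.2 (hθ _).2)

lemma reach_add (L : List ℕ) (m s : ℕ) :
    reach θ L (m + s) = reach θ L m * reach θ (L.drop m) s := by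
  rw [reach, prod_range_add]
  congr 1
  exact prod_congr rfl fun j _ => by simp [List.getD_eq_getElem?_getD, List.getElem?_drop]

lemma reach_append_of_le {L : List ℕ} (L' : List ℕ) {t : ℕ} (ht : t ≤ L.length) :
    reach θ (L ++ L') t = reach θ L t :=
  prod_congr rfl fun j hj => by rw [List.getD_append _ _ _ _ (by simp at hj; omega)]

lemma sum_range_reach_mul_one_sub (L : List ℕ) (n : ℕ) :
    ∑ t ∈ range n, reach θ L t * (1 - θ (L.getD t 0)) = 1 - reach θ L n := by
  have h : ∀ t ∈ range n, reach θ L t * (1 - θ (L.getD t 0)) = reach θ L t - reach θ L (t + 1) :=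
    fun t _ => by rw [reach_succ]; ring
  rw [sum_congr rfl h, sum_range_sub', reach_zero]

lemma toFinset_take_succ {L : List ℕ} {t : ℕ} (ht : t < L.length) :
    (L.take (t + 1)).toFinset = insert (L.getD t 0) (L.take t).toFinset := by
  have hsplit : L.take (t + 1) = L.take t ++ [L[t]] := by
    rw [List.take_add_one, List.getElem?_eq_getElem ht]; rfl
  rw [hsplit, List.toFinset_append, List.getD_eq_getElem _ _ ht]
  ext a
  simp [or_comm]

lemma getD_notMem_toFinset_take {L : List ℕ} (hnd : L.Nodup) {t : ℕ} (ht : t < L.length) :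
    L.getD t 0 ∉ (L.take t).toFinset := by
  rw [List.mem_toFinset, List.getD_eq_getElem _ _ ht]
  intro hmem
  refine List.disjoint_take_drop hnd le_rfl hmem ?_
  rw [List.drop_eq_getElem_cons ht]
  exact List.mem_cons_self

lemma prod_toFinset_take {L : List ℕ} (hnd : L.Nodup) {t : ℕ} (ht : t ≤ L.length) :
    ∏ i ∈ (L.take t).toFinset, θ i = reach θ L t := by
  induction t with
  | zero => simp [reach_zero]
  | succ t ih =>
    rw [toFinset_take_succ ht, prod_insert (getD_notMem_toFinset_take hnd ht), reach_succ,
      ih (Nat.le_of_succ_le ht), mul_comm]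

end Reach

/-- `f α β θ L` is the average of the revenue of the visited prefix over the position at which
the customer stops browsing; `cascadeAvg θ L h` is this average for an arbitrary value `h t` of
stopping after position `t`. -/
noncomputable def cascadeAvg (θ : ℕ → ℝ) (L : List ℕ) (h : ℕ → ℝ) : ℝ :=
  (∑ t ∈ range (L.length - 1), reach θ L t * (1 - θ (L.getD t 0)) * h t)
    + reach θ L (L.length - 1) * h (L.length - 1)

section CascadeAvg

variable {θ : ℕ → ℝ}

lemma f_eq_cascadeAvg (α β : ℕ → ℝ) (L : List ℕ) :
    f α β θ L = cascadeAvg θ L fun t => g α β (L.take (t + 1)).toFinset := by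
  rw [f, cascadeAvg, List.take_of_length_le (by omega : L.length ≤ L.length - 1 + 1)]

lemma cascadeAvg_const (L : List ℕ) (c : ℝ) : cascadeAvg θ L (fun _ => c) = c := by
  rw [cascadeAvg, ← sum_mul, sum_range_reach_mul_one_sub]
  ring

lemma cascadeAvg_const_add (L : List ℕ) (c : ℝ) (h : ℕ → ℝ) :
    cascadeAvg θ L (fun t => c + h t) = c + cascadeAvg θ L h := by
  conv_rhs => rw [← cascadeAvg_const (θ := θ) L c]
  simp only [cascadeAvg, mul_add, sum_add_distrib]
  ring

lemma cascadeAvg_mono (hθ : ∀ i, 0 ≤ θ i ∧ θ i ≤ 1) {L : List ℕ} {h h' : ℕ → ℝ}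
    (hh : ∀ t ≤ L.length - 1, h t ≤ h' t) : cascadeAvg θ L h ≤ cascadeAvg θ L h' :=
  add_le_add
    (sum_le_sum fun t ht => mul_le_mul_of_nonneg_left
      (hh t (Finset.mem_range.1 ht).le) (reach_mul_one_sub_nonneg hθ L t))
    (mul_le_mul_of_nonneg_left (hh _ le_rfl) (reach_nonneg hθ L _))

lemma reach_mul_le_cascadeAvg (hθ : ∀ i, 0 ≤ θ i ∧ θ i ≤ 1) (L : List ℕ) {h : ℕ → ℝ}
    (hh : ∀ t, 0 ≤ h t) : reach θ L (L.length - 1) * h (L.length - 1) ≤ cascadeAvg θ L h :=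
  le_add_of_nonneg_left
    (sum_nonneg fun t _ => mul_nonneg (reach_mul_one_sub_nonneg hθ L t) (hh t))

lemma cascadeAvg_eq_sum_add_reach_mul_drop {L : List ℕ} {m : ℕ} (hm : m < L.length)
    (h : ℕ → ℝ) :
    cascadeAvg θ L h = (∑ t ∈ range m, reach θ L t * (1 - θ (L.getD t 0)) * h t)
      + reach θ L m * cascadeAvg θ (L.drop m) (fun s => h (m + s)) := by
  have hlen : L.length - 1 = m + ((L.drop m).length - 1) := by simp; omega
  have hgetD : ∀ s, L.getD (m + s) 0 = (L.drop m).getD s 0 := fun s => by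
    simp [List.getD_eq_getElem?_getD, List.getElem?_drop]
  simp only [cascadeAvg, hlen, sum_range_add, reach_add L m, hgetD, mul_add, mul_sum]
  ring_nf

end CascadeAvg

section Sequence

variable {α β θ : ℕ → ℝ}

lemma f_nonneg (hα : ∀ i, 0 ≤ α i) (hβ : ∀ i, 0 ≤ β i) (hθ : ∀ i, 0 ≤ θ i ∧ θ i ≤ 1)
    (L : List ℕ) : 0 ≤ f α β θ L := by
  rw [f_eq_cascadeAvg]
  exact (mul_nonneg (reach_nonneg hθ L _) (g_nonneg hα hβ _)).trans
    (reach_mul_le_cascadeAvg hθ L fun _ => g_nonneg hα hβ _)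

lemma prod_mul_g_insert_le_f_append (hα : ∀ i, 0 ≤ α i) (hβ : ∀ i, 0 ≤ β i)
    (hθ : ∀ i, 0 ≤ θ i ∧ θ i ≤ 1) {S : List ℕ} (hS : S.Nodup) (y : ℕ) :
    (∏ i ∈ S.toFinset, θ i) * g α β (insert y S.toFinset) ≤ f α β θ (S ++ [y]) := by
  have hreach : reach θ (S ++ [y]) S.length = ∏ i ∈ S.toFinset, θ i := by
    rw [reach_append_of_le _ le_rfl, ← prod_toFinset_take hS le_rfl, List.take_length]
  have hlast : (S ++ [y]).take (S.length + 1) = S ++ [y] := List.take_of_length_le (by simp)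
  have hset : (S ++ [y]).toFinset = insert y S.toFinset := by ext; simp
  have := reach_mul_le_cascadeAvg hθ (S ++ [y]) fun t => g_nonneg hα hβ
    ((S ++ [y]).take (t + 1)).toFinset
  simp only [List.length_append, List.length_singleton, Nat.add_sub_cancel] at this
  rwa [hreach, hlast, hset, ← f_eq_cascadeAvg] at this

lemma g_toFinset_take_le {B : ℕ} {ρ M : ℝ} (hM0 : 0 ≤ M)
    (hM : ∀ (A : Finset ℕ) (y : ℕ), y ∉ A → ρ ≤ ∏ i ∈ A, θ i → A.card < B →
      g α β (insert y A) ≤ M)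
    {L : List ℕ} (hnd : L.Nodup) (hLB : L.length ≤ B) {t : ℕ}
    (hreach : ∀ s < t, s < L.length → ρ ≤ reach θ L s) : g α β (L.take t).toFinset ≤ M := by
  rw [List.take_eq_take_min]
  obtain h0 | ⟨s, hs⟩ : min t L.length = 0 ∨ ∃ s, min t L.length = s + 1 := by
    cases min t L.length <;> simp
  · simpa [h0, g_empty] using hM0
  have hsL : s < L.length := by omega
  rw [hs, toFinset_take_succ hsL]
  refine hM _ _ (getD_notMem_toFinset_take hnd hsL) ?_ ?_
  · rw [prod_toFinset_take hnd hsL.le]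
    exact hreach s (by omega) hsL
  · rw [List.toFinset_card_of_nodup (hnd.sublist (List.take_sublist _ _)), List.length_take]
    omega

lemma g_toFinset_take_add_le (hα : ∀ i, 0 ≤ α i) (hβ : ∀ i, 0 ≤ β i) {L : List ℕ}
    (hnd : L.Nodup) (m s : ℕ) :
    g α β (L.take (m + s)).toFinset ≤
      g α β (L.take m).toFinset + g α β ((L.drop m).take s).toFinset := by
  rw [List.take_add, List.toFinset_append]
  exact g_union_le_add hα hβ <| List.disjoint_toFinset_iff_disjoint.2 <|
    List.disjoint_of_subset_right (List.take_sublist _ _).subset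
      (List.disjoint_take_drop hnd le_rfl)

theorem f_le_add_mul (hα : ∀ i, 0 ≤ α i) (hβ : ∀ i, 0 ≤ β i)
    (hθ : ∀ i, 0 ≤ θ i ∧ θ i ≤ 1) {B : ℕ} {ρ M F : ℝ} (hρ : 0 ≤ ρ) (hM0 : 0 ≤ M)
    (hF0 : 0 ≤ F)
    (hM : ∀ (A : Finset ℕ) (y : ℕ), y ∉ A → ρ ≤ ∏ i ∈ A, θ i → A.card < B →
      g α β (insert y A) ≤ M)
    (hF : ∀ L : List ℕ, L.Nodup → L.length ≤ B → f α β θ L ≤ F)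
    {L : List ℕ} (hnd : L.Nodup) (hLB : L.length ≤ B) :
    f α β θ L ≤ M + ρ * F := by
  rw [f_eq_cascadeAvg]
  by_cases hfeas : ∀ t < L.length, ρ ≤ reach θ L t
  · calc _ ≤ cascadeAvg θ L (fun _ => M) := cascadeAvg_mono hθ fun t _ =>
          g_toFinset_take_le hM0 hM hnd hLB fun s _ hs => hfeas s hs
      _ = M := cascadeAvg_const L M
      _ ≤ M + ρ * F := le_add_of_nonneg_right (mul_nonneg hρ hF0)
  push Not at hfeas
  classical
  let m := Nat.find hfeas
  obtain ⟨hmL, hm⟩ : m < L.length ∧ reach θ L m < ρ := Nat.find_spec hfeas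
  have hbefore : ∀ s < m, s < L.length → ρ ≤ reach θ L s :=
    fun s hs hsL => not_lt.1 fun h => Nat.find_min hfeas hs ⟨hsL, h⟩
  let D := L.drop m
  have hhead : ∀ t < m, g α β (L.take (t + 1)).toFinset ≤ M := fun t ht =>
    g_toFinset_take_le hM0 hM hnd hLB fun s hs hsL => hbefore s (by omega) hsL
  have htail : ∀ s, g α β (L.take (m + s + 1)).toFinset ≤
      M + g α β (D.take (s + 1)).toFinset := fun s =>
    add_assoc m s 1 ▸ (g_toFinset_take_add_le hα hβ hnd m (s + 1)).trans
      (add_le_add_left (g_toFinset_take_le hM0 hM hnd hLB hbefore) _)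
  have hfD : f α β θ D ≤ F := hF D (hnd.sublist (List.drop_sublist _ _)) (by simp [D]; omega)
  rw [cascadeAvg_eq_sum_add_reach_mul_drop hmL]
  calc _ ≤ (∑ t ∈ range m, reach θ L t * (1 - θ (L.getD t 0)) * M)
        + reach θ L m * cascadeAvg θ D (fun s => M + g α β (D.take (s + 1)).toFinset) :=
        add_le_add
          (sum_le_sum fun t ht => mul_le_mul_of_nonneg_left (hhead t (mem_range.1 ht))
            (reach_mul_one_sub_nonneg hθ L t))
          (mul_le_mul_of_nonneg_left (cascadeAvg_mono hθ fun s _ => htail s)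
            (reach_nonneg hθ L m))
    _ = (1 - reach θ L m) * M + reach θ L m * (M + f α β θ D) := by
        rw [← sum_mul, sum_range_reach_mul_one_sub, cascadeAvg_const_add, f_eq_cascadeAvg]
    _ = M + reach θ L m * f α β θ D := by ring
    _ ≤ M + ρ * F := add_le_add le_rfl (mul_le_mul hm.le hfD (f_nonneg hα hβ hθ D) hρ)

end Sequence

theorem stmt8_general (α β θ : ℕ → ℝ) (hα : ∀ i, 0 ≤ α i) (hβ : ∀ i, 0 ≤ β i)
    (hθ : ∀ i, 0 ≤ θ i ∧ θ i ≤ 1)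
    (B : ℕ) (ρ ε : ℝ) (hρ0 : 0 ≤ ρ) (hρ1 : ρ ≤ 1)
    (O : List ℕ) (hO : O.Nodup) (hOB : O.length ≤ B)
    (hopt : ∀ L : List ℕ, L.Nodup → L.length ≤ B → f α β θ L ≤ f α β θ O)
    (𝒮 : Finset ℕ) (y : ℕ)
    (hC1 : ρ ≤ ∏ i ∈ 𝒮, θ i)
    (happrox : ∀ (𝒮' : Finset ℕ) (y' : ℕ), y' ∉ 𝒮' → ρ ≤ ∏ i ∈ 𝒮', θ i →
        𝒮'.card < B →
        (1 - ε * (1 + ε)) / (1 + ε * (1 + ε)) * g α β (insert y' 𝒮')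
          ≤ g α β (insert y 𝒮))
    (S : List ℕ) (hSnd : S.Nodup) (hStoF : S.toFinset = 𝒮) :
    (1 - ε * (1 + ε)) / (1 + ε * (1 + ε)) * (ρ * (1 - ρ)) * f α β θ O
      ≤ f α β θ (S ++ [y]) := by
  set c := (1 - ε * (1 + ε)) / (1 + ε * (1 + ε))
  have hfO := f_nonneg hα hβ hθ O
  rcases le_or_gt c 0 with hc | hc
  · calc c * (ρ * (1 - ρ)) * f α β θ O ≤ 0 :=
          mul_nonpos_of_nonpos_of_nonneg
            (mul_nonpos_of_nonpos_of_nonneg hc (mul_nonneg hρ0 (sub_nonneg.2 hρ1))) hfO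
      _ ≤ f α β θ (S ++ [y]) := f_nonneg hα hβ hθ _
  have hG := g_nonneg hα hβ (insert y 𝒮)
  have hO_le : f α β θ O ≤ g α β (insert y 𝒮) / c + ρ * f α β θ O :=
    f_le_add_mul hα hβ hθ hρ0 (div_nonneg hG hc.le) hfO
      (fun A y' hy' hA hAB => (le_div_iff₀' hc).2 (happrox A y' hy' hA hAB)) hopt hO hOB
  have hbound : c * ((1 - ρ) * f α β θ O) ≤ g α β (insert y 𝒮) :=
    (le_div_iff₀' hc).1 (by linarith)
  calc c * (ρ * (1 - ρ)) * f α β θ O = ρ * (c * ((1 - ρ) * f α β θ O)) := by ring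
    _ ≤ (∏ i ∈ 𝒮, θ i) * g α β (insert y 𝒮) := mul_le_mul hC1 hbound
        (mul_nonneg hc.le (mul_nonneg (sub_nonneg.2 hρ1) hfO)) (prod_nonneg fun i _ => (hθ i).1)
    _ ≤ f α β θ (S ++ [y]) := hStoF ▸ prod_mul_g_insert_le_f_append hα hβ hθ hSnd y

/-- Theorem 1: appending `y` to any ordering of a
`c`-approximately optimal P.A.1 solution `(𝒮, y)` yields a sequence with
expected revenue at least `c · ρ(1-ρ) · f(O)`, where
`c = (1 - ε(1+ε))/(1 + ε(1+ε))`. -/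
theorem stmt8 (α β θ : ℕ → ℝ) (hα : ∀ i, 0 ≤ α i) (hβ : ∀ i, 0 ≤ β i)
    (hθ : ∀ i, 0 ≤ θ i ∧ θ i ≤ 1)
    (B : ℕ) (hB : 1 ≤ B) (ρ ε : ℝ) (hρ0 : 0 ≤ ρ) (hρ1 : ρ ≤ 1) (hε : 0 < ε)
    (O : List ℕ) (hO : O.Nodup) (hOB : O.length ≤ B)
    (hopt : ∀ L : List ℕ, L.Nodup → L.length ≤ B → f α β θ L ≤ f α β θ O)
    (𝒮 : Finset ℕ) (y : ℕ) (hy : y ∉ 𝒮)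
    (hC1 : ρ ≤ ∏ i ∈ 𝒮, θ i) (hC2 : 𝒮.card < B)
    (happrox : ∀ (𝒮' : Finset ℕ) (y' : ℕ), y' ∉ 𝒮' → ρ ≤ ∏ i ∈ 𝒮', θ i →
        𝒮'.card < B →
        (1 - ε * (1 + ε)) / (1 + ε * (1 + ε)) * g α β (insert y' 𝒮')
          ≤ g α β (insert y 𝒮))
    (S : List ℕ) (hSnd : S.Nodup) (hStoF : S.toFinset = 𝒮) :
    (1 - ε * (1 + ε)) / (1 + ε * (1 + ε)) * (ρ * (1 - ρ)) * f α β θ O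
      ≤ f α β θ (S ++ [y]) :=
  stmt8_general α β θ hα hβ hθ B ρ ε hρ0 hρ1 O hO hOB hopt 𝒮 y hC1 happrox S hSnd hStoF
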